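/- For every integer m ≥ 0, π/12 = ∑_{n=0}^∞ ((−1)^n/(2n+1)) · L_{2m(2n+1)} · (2(2 − √3) / (L_{2m} + √(L_{2m}² + 4(2 − √3)²)))^{2n+1}, where the series on the right converges. -/

import Mathlib

/-- Lucas numbers: `L 0 = 2`, `L 1 = 1`, `L (n+2) = L (n+1) + L n`. -/
def lucasNum : ℕ → ℕ
  | 0 => 2
  | 1 => 1
  | n + 2 => lucasNum (n + 1) + lucasNum n

open Real

lemma lucasNum_real (n : ℕ) :
    (lucasNum n : ℝ) = goldenRatio ^ n + goldenConj ^ n := by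
  induction n using Nat.twoStepInduction with
  | zero => norm_num [lucasNum]
  | one => simpa [lucasNum] using gold_add_goldConj.symm
  | more n ih1 ih2 =>
      have h1 : goldenRatio ^ (n + 2) = goldenRatio ^ (n + 1) + goldenRatio ^ n := by
        rw [pow_succ, pow_succ]
        linear_combination (goldenRatio ^ n) * goldenRatio_sq
      have h2 : goldenConj ^ (n + 2) = goldenConj ^ (n + 1) + goldenConj ^ n := by
        rw [pow_succ, pow_succ]
        linear_combination (goldenConj ^ n) * goldenConj_sq
      show ((lucasNum (n + 1) + lucasNum n : ℕ) : ℝ) = _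
      push_cast
      rw [ih1, ih2, h1, h2]; ring

lemma arctan_two_sub_sqrt_three : arctan (2 - Real.sqrt 3) = π / 12 := by
  have h3 : Real.sqrt 3 ^ 2 = 3 := Real.sq_sqrt (by norm_num)
  have h3' : 1 < Real.sqrt 3 := by nlinarith [Real.sqrt_nonneg 3]
  have h3'' : Real.sqrt 3 < 2 := by nlinarith [Real.sqrt_nonneg 3]
  have hlt : (2 - Real.sqrt 3) * 1 < 1 := by nlinarith
  have hadd := Real.arctan_add hlt
  have heq : (2 - Real.sqrt 3 + 1) / (1 - (2 - Real.sqrt 3) * 1) = Real.sqrt 3 := by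
    rw [div_eq_iff (by nlinarith)]
    nlinarith
  have hsq3 : arctan (Real.sqrt 3) = π / 3 :=
    Real.arctan_eq_of_tan_eq Real.tan_pi_div_three
      ⟨by linarith [pi_pos], by linarith [pi_pos]⟩
  rw [heq, hsq3, Real.arctan_one] at hadd
  linarith


lemma hasSum_aux {a b c : ℝ} (hab : a * b = 1) (ha1 : 1 ≤ a) (hb0 : 0 < b)
    (hc0 : 0 < c) (hc2 : c < 1 / 2) :
    HasSum (fun n : ℕ => (-1 : ℝ) ^ n / (2 * (n : ℝ) + 1) *
      (a ^ (2 * n + 1) + b ^ (2 * n + 1)) *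
      (2 * c / ((a + b) + Real.sqrt ((a + b) ^ 2 + 4 * c ^ 2))) ^ (2 * n + 1))
      (arctan c) := by
  have hb1 : b ≤ 1 := by nlinarith
  set L : ℝ := a + b with hL_def
  have hLpos : 0 < L := by nlinarith
  set s : ℝ := Real.sqrt (L ^ 2 + 4 * c ^ 2) with hs_def
  have hs2 : s ^ 2 = L ^ 2 + 4 * c ^ 2 := Real.sq_sqrt (by positivity)
  have hsL : L < s := by nlinarith [Real.sqrt_nonneg (L ^ 2 + 4 * c ^ 2)]
  have hspos : 0 < s := lt_trans hLpos hsL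
  have hLs : L + s ≠ 0 := by positivity
  set q : ℝ := 2 * c / (L + s) with hq_def
  have hq0 : 0 < q := by positivity
  have haL : a ≤ L := by nlinarith
  have hqs : q * (L + s) = 2 * c := by rw [hq_def]; field_simp
  have haq : a * q < 1 := by
    have h1 : a * q = 2 * c * a / (L + s) := by rw [hq_def]; ring
    rw [h1, div_lt_one (by linarith)]
    nlinarith
  have hbq : b * q < 1 := by nlinarith
  have hq1 : q < 1 := by nlinarith
  have h1 : HasSum (fun n : ℕ => (-1 : ℝ) ^ n * (a * q) ^ (2 * n + 1) / ↑(2 * n + 1))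
      (arctan (a * q)) :=
    Real.hasSum_arctan (by rw [Real.norm_eq_abs, abs_of_pos (by positivity)]; exact haq)
  have h2 : HasSum (fun n : ℕ => (-1 : ℝ) ^ n * (b * q) ^ (2 * n + 1) / ↑(2 * n + 1))
      (arctan (b * q)) :=
    Real.hasSum_arctan (by rw [Real.norm_eq_abs, abs_of_pos (by positivity)]; exact hbq)
  have hsum := h1.add h2
  have hq_quad' : (c * q ^ 2 + L * q - c) * (L + s) ^ 2 = 0 := by
    linear_combination (c * q * (L + s) + 2 * c ^ 2 + L * (L + s)) * hqs - c * hs2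
  have hq_quad : c * q ^ 2 + L * q - c = 0 :=
    (mul_eq_zero.mp hq_quad').resolve_right (pow_ne_zero _ (by positivity))
  have harc : arctan (a * q) + arctan (b * q) = arctan c := by
    have hq2 : a * q * (b * q) = q ^ 2 := by linear_combination q ^ 2 * hab
    have hmul : a * q * (b * q) < 1 := by nlinarith
    rw [Real.arctan_add hmul]
    congr 1
    rw [hq2, div_eq_iff (by nlinarith)]
    linear_combination hq_quad - q * hL_def
  rw [harc] at hsum
  have hfe : (fun n : ℕ => (-1 : ℝ) ^ n / (2 * (n : ℝ) + 1) *
      (a ^ (2 * n + 1) + b ^ (2 * n + 1)) * q ^ (2 * n + 1)) =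
      fun n : ℕ => (-1 : ℝ) ^ n * (a * q) ^ (2 * n + 1) / ↑(2 * n + 1)
        + (-1 : ℝ) ^ n * (b * q) ^ (2 * n + 1) / ↑(2 * n + 1) := by
    funext n
    rw [mul_pow, mul_pow]
    push_cast
    ring
  rw [hfe]
  exact hsum

theorem pi_div_twelve_lucas_series (m : ℕ) :
    HasSum
      (fun n : ℕ => (-1 : ℝ) ^ n / (2 * (n : ℝ) + 1) *
        (lucasNum (2 * m * (2 * n + 1)) : ℝ) *
        (2 * (2 - Real.sqrt 3) / ((lucasNum (2 * m) : ℝ) +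
          Real.sqrt ((lucasNum (2 * m) : ℝ) ^ 2 +
            4 * (2 - Real.sqrt 3) ^ 2))) ^ (2 * n + 1))
      (Real.pi / 12) := by
  have h3 : Real.sqrt 3 ^ 2 = 3 := Real.sq_sqrt (by norm_num)
  have hc0 : 0 < 2 - Real.sqrt 3 := by nlinarith [Real.sqrt_nonneg 3]
  have hc2 : 2 - Real.sqrt 3 < 1 / 2 := by nlinarith [Real.sqrt_nonneg 3]
  set a : ℝ := goldenRatio ^ (2 * m) with ha_def
  set b : ℝ := goldenConj ^ (2 * m) with hb_def
  have hab : a * b = 1 := by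
    rw [ha_def, hb_def, ← mul_pow, goldenRatio_mul_goldenConj]
    simp [pow_mul]
  have ha1 : 1 ≤ a := one_le_pow₀ (le_of_lt one_lt_goldenRatio)
  have hb0 : 0 < b := by
    rw [hb_def, pow_mul]
    exact pow_pos (pow_two_pos_of_ne_zero goldenConj_ne_zero) m
  have key := hasSum_aux hab ha1 hb0 hc0 hc2
  rw [arctan_two_sub_sqrt_three] at key
  have hL : (lucasNum (2 * m) : ℝ) = a + b := lucasNum_real (2 * m)
  have hfe : (fun n : ℕ => (-1 : ℝ) ^ n / (2 * (n : ℝ) + 1) *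
        (lucasNum (2 * m * (2 * n + 1)) : ℝ) *
        (2 * (2 - Real.sqrt 3) / ((lucasNum (2 * m) : ℝ) +
          Real.sqrt ((lucasNum (2 * m) : ℝ) ^ 2 +
            4 * (2 - Real.sqrt 3) ^ 2))) ^ (2 * n + 1)) =
      fun n : ℕ => (-1 : ℝ) ^ n / (2 * (n : ℝ) + 1) *
        (a ^ (2 * n + 1) + b ^ (2 * n + 1)) *
        (2 * (2 - Real.sqrt 3) / ((a + b) +
          Real.sqrt ((a + b) ^ 2 + 4 * (2 - Real.sqrt 3) ^ 2))) ^ (2 * n + 1) := by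
    funext n
    rw [hL, lucasNum_real, ha_def, hb_def, ← pow_mul, ← pow_mul]
  rw [hfe]
  exact key
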